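/- Let E be a real normed vector space and let f, g : E → ℝ be convex continuous functions admitting a common continuous affine minorant. Let x ∈ E and let x*, z* ∈ E* be subgradients, i.e. f(u) ≥ f(x) + x*(u − x) and g(u) ≥ g(x) + z*(u − x) for all u ∈ E. Then for all real numbers c₁, c₂ such that x*(u) − g(u) ≤ c₁ and z*(u) − f(u) ≤ c₂ for all u ∈ E, one has 0 ≤ (f ∇ g)(x) − L(f,g)(x) ≤ (1/12)·[ (g(x) + c₁ − x*(x)) + (f(x) + c₂ − z*(x)) ], where (f ∇ g)(x) = (f(x)+g(x))/2 and L(f,g)(x) = ∫₀¹ (f ♯_t g)(x) dt. -/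

import Mathlib

/-!
The subgradient `x*` of `f` at `x`, with the constants `x*(x) − f(x)` and `c₁`, and the
subgradient `z*` of `g`, with `c₂` and `z*(x) − g(x)`, are two competitors in the supremum defining
`(f !_t g)(x)`. With `S` the bracket on the right of the claim, the `(1−t, t)`-combination of their
values gives, for `t ∈ [0,1]`,
`(1−t) f(x) + t g(x) − t(1−t) S ≤ (f !_t g)(x) ≤ (1−t) f(x) + t g(x)`.
Integrating against the weight `t^(λ−1) (1−t)^(−λ)`, whose moments are Beta integrals, gives
`(1−λ) f(x) + λ g(x) − λ(1−λ) S/2 ≤ (f ♯_λ g)(x) ≤ (1−λ) f(x) + λ g(x)`, and integrating over `λ`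
gives `(f∇g)(x) − S/12 ≤ L(f,g)(x) ≤ (f∇g)(x)`.
-/

open Real

/-- The `t`-weighted functional harmonic mean of `f,g : E → ℝ`, evaluated at `x`. -/
noncomputable def funHarm {E : Type*} [NormedAddCommGroup E] [NormedSpace ℝ E]
    (f g : E → ℝ) (t : ℝ) (x : E) : ℝ :=
  sSup { r : ℝ | ∃ φ : E →L[ℝ] ℝ, ∃ c₁ c₂ : ℝ,
    (∀ u : E, φ u - f u ≤ c₁) ∧ (∀ u : E, φ u - g u ≤ c₂) ∧
    r = φ x - (1 - t) * c₁ - t * c₂ }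

/-- The `λ`-weighted functional geometric mean of `f,g : E → ℝ`, evaluated at `x`. -/
noncomputable def funGeom {E : Type*} [NormedAddCommGroup E] [NormedSpace ℝ E]
    (f g : E → ℝ) (l : ℝ) (x : E) : ℝ :=
  (Real.sin (π * l) / π) *
    ∫ t in (0 : ℝ)..1, t ^ (l - 1) * (1 - t) ^ (-l) * funHarm f g t x

/-- The logarithmic mean `L(f,g)(x) = ∫₀¹ (f ♯_t g)(x) dt`. -/
noncomputable def funLog {E : Type*} [NormedAddCommGroup E] [NormedSpace ℝ E]
    (f g : E → ℝ) (x : E) : ℝ :=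
  ∫ t in (0 : ℝ)..1, funGeom f g t x

open MeasureTheory Set

lemma ofReal_rpow_mul_one_sub_rpow {u v t : ℝ} (ht : t ∈ Icc (0 : ℝ) 1) :
    ((t ^ (u - 1) * (1 - t) ^ (v - 1) : ℝ) : ℂ)
      = (t : ℂ) ^ ((u : ℂ) - 1) * (1 - (t : ℂ)) ^ ((v : ℂ) - 1) := by
  push_cast [Complex.ofReal_cpow ht.1, Complex.ofReal_cpow (sub_nonneg.2 ht.2)]
  rfl

lemma intervalIntegrable_rpow_mul_one_sub_rpow {u v : ℝ} (hu : 0 < u) (hv : 0 < v) :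
    IntervalIntegrable (fun t : ℝ => t ^ (u - 1) * (1 - t) ^ (v - 1)) volume 0 1 := by
  have h := Complex.betaIntegral_convergent (u := u) (v := v) (by simpa) (by simpa)
  rw [intervalIntegrable_iff_integrableOn_Icc_of_le zero_le_one] at h ⊢
  refine IntegrableOn.congr_fun h.re (fun t ht => ?_) measurableSet_Icc
  simp [← ofReal_rpow_mul_one_sub_rpow ht]

lemma integral_rpow_mul_one_sub_rpow {u v : ℝ} (hu : 0 < u) (hv : 0 < v) :
    ∫ t in (0 : ℝ)..1, t ^ (u - 1) * (1 - t) ^ (v - 1) = Gamma u * Gamma v / Gamma (u + v) := by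
  have h := Complex.betaIntegral_eq_Gamma_mul_div u v (by simpa) (by simpa)
  rw [Complex.betaIntegral, ← intervalIntegral.integral_congr
    (fun t ht => ofReal_rpow_mul_one_sub_rpow (by rwa [uIcc_of_le zero_le_one] at ht)),
    intervalIntegral.integral_ofReal, ← Complex.ofReal_add] at h
  simp only [Complex.Gamma_ofReal] at h
  exact_mod_cast h

noncomputable def geomWeight (l t : ℝ) : ℝ := t ^ (l - 1) * (1 - t) ^ (-l)

lemma measurable_geomWeight : Measurable (Function.uncurry geomWeight) := by
  unfold Function.uncurry geomWeight
  fun_prop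

lemma geomWeight_nonneg (l : ℝ) {t : ℝ} (ht : t ∈ Icc (0 : ℝ) 1) : 0 ≤ geomWeight l t :=
  mul_nonneg (rpow_nonneg ht.1 _) (rpow_nonneg (sub_nonneg.2 ht.2) _)

lemma geomWeight_mul_pow {l t : ℝ} (ht : 0 < t) (n : ℕ) :
    geomWeight l t * t ^ n = t ^ ((l + n) - 1) * (1 - t) ^ ((1 - l) - 1) := by
  rw [geomWeight, show l + n - 1 = (l - 1) + n by ring, rpow_add_natCast ht.ne',
    show 1 - l - 1 = -l by ring]
  ring

lemma geomWeight_mul_one_sub_mul_add_mul_sub (l a b c t : ℝ) :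
    geomWeight l t * ((1 - t) * a + t * b - t * (1 - t) * c)
      = a * (geomWeight l t * t ^ 0) + (b - a - c) * (geomWeight l t * t ^ 1)
        + c * (geomWeight l t * t ^ 2) := by
  ring

section GeomWeight

variable {l : ℝ} (hl : l ∈ Ioo (0 : ℝ) 1)
include hl

lemma intervalIntegrable_geomWeight_mul_pow (n : ℕ) :
    IntervalIntegrable (fun t => geomWeight l t * t ^ n) volume 0 1 := by
  have h := intervalIntegrable_rpow_mul_one_sub_rpow (u := l + n) (v := 1 - l)
    (by linarith [hl.1, n.cast_nonneg (α := ℝ)]) (by linarith [hl.2])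
  rw [intervalIntegrable_iff_integrableOn_Ioc_of_le zero_le_one] at h ⊢
  exact h.congr_fun (fun t ht => (geomWeight_mul_pow ht.1 n).symm) measurableSet_Ioc

lemma integral_geomWeight_mul_pow (n : ℕ) :
    ∫ t in (0 : ℝ)..1, geomWeight l t * t ^ n = Gamma (l + n) * Gamma (1 - l) / n.factorial := by
  rw [intervalIntegral.integral_congr_ae (g := fun t => t ^ ((l + n) - 1) * (1 - t) ^ ((1 - l) - 1))
      (ae_of_all _ fun t ht => geomWeight_mul_pow (uIoc_of_le (zero_le_one' ℝ) ▸ ht).1 n),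
    integral_rpow_mul_one_sub_rpow (by linarith [hl.1, n.cast_nonneg (α := ℝ)])
      (by linarith [hl.2]),
    show l + n + (1 - l) = n + 1 by ring, Gamma_nat_eq_factorial]

lemma intervalIntegrable_geomWeight_mul (a b c : ℝ) :
    IntervalIntegrable (fun t => geomWeight l t * ((1 - t) * a + t * b - t * (1 - t) * c))
      volume 0 1 := by
  simp only [geomWeight_mul_one_sub_mul_add_mul_sub]
  exact (((intervalIntegrable_geomWeight_mul_pow hl 0).const_mul a).add
    ((intervalIntegrable_geomWeight_mul_pow hl 1).const_mul _)).add
    ((intervalIntegrable_geomWeight_mul_pow hl 2).const_mul c)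

lemma integral_geomWeight_mul (a b c : ℝ) :
    ∫ t in (0 : ℝ)..1, geomWeight l t * ((1 - t) * a + t * b - t * (1 - t) * c)
      = π / sin (π * l) * ((1 - l) * a + l * b - l * (1 - l) * (c / 2)) := by
  have hI := intervalIntegrable_geomWeight_mul_pow hl
  have hΓ₁ : Gamma (l + 1) = l * Gamma l := Gamma_add_one hl.1.ne'
  have hΓ₂ : Gamma (l + 2) = (l + 1) * (l * Gamma l) := by
    rw [show l + 2 = (l + 1) + 1 by ring, Gamma_add_one (by linarith [hl.1]), hΓ₁]
  simp only [geomWeight_mul_one_sub_mul_add_mul_sub]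
  rw [intervalIntegral.integral_add (((hI 0).const_mul a).add ((hI 1).const_mul _))
      ((hI 2).const_mul c), intervalIntegral.integral_add ((hI 0).const_mul a) ((hI 1).const_mul _),
    intervalIntegral.integral_const_mul, intervalIntegral.integral_const_mul,
    intervalIntegral.integral_const_mul, integral_geomWeight_mul_pow hl,
    integral_geomWeight_mul_pow hl, integral_geomWeight_mul_pow hl, ← Gamma_mul_Gamma_one_sub]
  push_cast
  rw [add_zero, hΓ₁, hΓ₂]
  simp only [Nat.factorial, Nat.cast_one]
  ring

end GeomWeight

lemma integral_one_sub_mul_add_mul_sub (a b c : ℝ) :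
    ∫ l in (0 : ℝ)..1, ((1 - l) * a + l * b - l * (1 - l) * c) = (a + b) / 2 - c / 6 := by
  have h : ∀ l : ℝ, (1 - l) * a + l * b - l * (1 - l) * c = a + (b - a - c) * l + c * l ^ 2 :=
    fun l => by ring
  simp only [h]
  rw [intervalIntegral.integral_add, intervalIntegral.integral_add,
    intervalIntegral.integral_const_mul, intervalIntegral.integral_const_mul]
  · norm_num
    ring
  all_goals exact Continuous.intervalIntegrable (by fun_prop) _ _

lemma intervalIntegral_mem_Icc_of_mem_Icc {f lo hi : ℝ → ℝ} {a b : ℝ} (hab : a ≤ b)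
    (hf : AEStronglyMeasurable f (volume.restrict (Ioc a b)))
    (hlo : IntervalIntegrable lo volume a b) (hhi : IntervalIntegrable hi volume a b)
    (h : ∀ t ∈ Ioo a b, f t ∈ Icc (lo t) (hi t)) :
    ∫ t in a..b, f t ∈ Icc (∫ t in a..b, lo t) (∫ t in a..b, hi t) := by
  have hae : ∀ᵐ t ∂(volume.restrict (Ioc a b)), f t ∈ Icc (lo t) (hi t) := by
    rw [← Measure.restrict_congr_set Ioo_ae_eq_Ioc]
    exact ae_restrict_of_forall_mem measurableSet_Ioo h
  rw [intervalIntegrable_iff_integrableOn_Ioc_of_le hab] at hlo hhi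
  have hfi : IntegrableOn f (Ioc a b) :=
    integrable_of_le_of_le hf (hae.mono fun _ ht => ht.1) (hae.mono fun _ ht => ht.2) hlo hhi
  simp only [intervalIntegral.integral_of_le hab]
  exact ⟨setIntegral_mono_ae_restrict hlo hfi (hae.mono fun _ ht => ht.1),
    setIntegral_mono_ae_restrict hfi hhi (hae.mono fun _ ht => ht.2)⟩

section FunHarm

variable {E : Type*} [NormedAddCommGroup E] [NormedSpace ℝ E] {f g : E → ℝ} (x : E)
  {φ : E →L[ℝ] ℝ} {c₁ c₂ t : ℝ}

lemma affine_le_one_sub_mul_add_mul (hφf : ∀ u, φ u - f u ≤ c₁) (hφg : ∀ u, φ u - g u ≤ c₂)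
    (ht : t ∈ Icc (0 : ℝ) 1) : φ x - (1 - t) * c₁ - t * c₂ ≤ (1 - t) * f x + t * g x := by
  nlinarith [hφf x, hφg x, ht.1, ht.2]

lemma le_funHarm (hφf : ∀ u, φ u - f u ≤ c₁) (hφg : ∀ u, φ u - g u ≤ c₂)
    (ht : t ∈ Icc (0 : ℝ) 1) : φ x - (1 - t) * c₁ - t * c₂ ≤ funHarm f g t x :=
  le_csSup ⟨(1 - t) * f x + t * g x, by
    rintro _ ⟨ψ, d₁, d₂, hψf, hψg, rfl⟩
    exact affine_le_one_sub_mul_add_mul x hψf hψg ht⟩ ⟨φ, c₁, c₂, hφf, hφg, rfl⟩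

lemma funHarm_le (hφf : ∀ u, φ u - f u ≤ c₁) (hφg : ∀ u, φ u - g u ≤ c₂)
    (ht : t ∈ Icc (0 : ℝ) 1) : funHarm f g t x ≤ (1 - t) * f x + t * g x :=
  csSup_le ⟨_, φ, c₁, c₂, hφf, hφg, rfl⟩ (by
    rintro _ ⟨ψ, d₁, d₂, hψf, hψg, rfl⟩
    exact affine_le_one_sub_mul_add_mul x hψf hψg ht)

lemma convexOn_funHarm (hφf : ∀ u, φ u - f u ≤ c₁) (hφg : ∀ u, φ u - g u ≤ c₂) :
    ConvexOn ℝ (Icc (0 : ℝ) 1) (fun t => funHarm f g t x) := by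
  refine ⟨convex_Icc 0 1, fun p hp q hq α β hα hβ hαβ => ?_⟩
  refine csSup_le ⟨_, φ, c₁, c₂, hφf, hφg, rfl⟩ ?_
  rintro _ ⟨ψ, d₁, d₂, hψf, hψg, rfl⟩
  calc ψ x - (1 - (α • p + β • q)) * d₁ - (α • p + β • q) * d₂
      = α * (ψ x - (1 - p) * d₁ - p * d₂) + β * (ψ x - (1 - q) * d₁ - q * d₂) := by
        simp only [smul_eq_mul]
        linear_combination (d₁ - ψ x) * hαβ
    _ ≤ α * funHarm f g p x + β * funHarm f g q x := by
        gcongr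
        exacts [le_funHarm x hψf hψg hp, le_funHarm x hψf hψg hq]

lemma aestronglyMeasurable_funHarm (hφf : ∀ u, φ u - f u ≤ c₁) (hφg : ∀ u, φ u - g u ≤ c₂) :
    AEStronglyMeasurable (fun t => funHarm f g t x) (volume.restrict (Ioc 0 1)) := by
  have h := (convexOn_funHarm x hφf hφg).continuousOn_interior
  rw [interior_Icc] at h
  rw [← Measure.restrict_congr_set Ioo_ae_eq_Ioc]
  exact h.aestronglyMeasurable measurableSet_Ioo

end FunHarm

section FunGeom

variable {E : Type*} [NormedAddCommGroup E] [NormedSpace ℝ E] {f g : E → ℝ} {x : E}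

lemma funGeom_eq (l : ℝ) :
    funGeom f g l x = sin (π * l) / π * ∫ t in (0 : ℝ)..1, geomWeight l t * funHarm f g t x :=
  rfl

lemma aestronglyMeasurable_funGeom {μ : Measure ℝ} [SFinite μ]
    (hH : AEStronglyMeasurable (fun t => funHarm f g t x) (volume.restrict (Ioc 0 1))) :
    AEStronglyMeasurable (fun l => funGeom f g l x) μ := by
  have hprod : AEStronglyMeasurable (fun p : ℝ × ℝ => geomWeight p.1 p.2 * funHarm f g p.2 x)
      (μ.prod (volume.restrict (Ioc 0 1))) :=
    measurable_geomWeight.aestronglyMeasurable.mul hH.comp_snd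
  simp only [funGeom_eq, intervalIntegral.integral_of_le zero_le_one]
  exact (by fun_prop : Measurable fun l => sin (π * l) / π).aestronglyMeasurable.mul
    hprod.integral_prod_right'

end FunGeom

lemma sub_le_sub_of_subgradient {E : Type*} [NormedAddCommGroup E] [NormedSpace ℝ E]
    {f : E → ℝ} {x : E} {φ : E →L[ℝ] ℝ} (h : ∀ u, f x + φ (u - x) ≤ f u) (u : E) :
    φ u - f u ≤ φ x - f x := by
  have := h u
  rw [map_sub] at this
  linarith

section Subgradient

variable {E : Type*} [NormedAddCommGroup E] [NormedSpace ℝ E] {f g : E → ℝ} {x : E}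
  {xs zs : E →L[ℝ] ℝ} {c₁ c₂ : ℝ}
  (hxs : ∀ u : E, f x + xs (u - x) ≤ f u) (hzs : ∀ u : E, g x + zs (u - x) ≤ g u)
  (hc₁ : ∀ u : E, xs u - g u ≤ c₁) (hc₂ : ∀ u : E, zs u - f u ≤ c₂)
include hxs hzs hc₁ hc₂

lemma funHarm_mem_Icc {t : ℝ} (ht : t ∈ Icc (0 : ℝ) 1) :
    funHarm f g t x ∈ Icc ((1 - t) * f x + t * g x
        - t * (1 - t) * (g x + c₁ - xs x + (f x + c₂ - zs x))) ((1 - t) * f x + t * g x) := by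
  have h₁ := le_funHarm x (sub_le_sub_of_subgradient hxs) hc₁ ht
  have h₂ := le_funHarm x hc₂ (sub_le_sub_of_subgradient hzs) ht
  refine ⟨?_, funHarm_le x (sub_le_sub_of_subgradient hxs) hc₁ ht⟩
  nlinarith [mul_le_mul_of_nonneg_left h₁ (sub_nonneg.2 ht.2), mul_le_mul_of_nonneg_left h₂ ht.1]

lemma funGeom_mem_Icc {l : ℝ} (hl : l ∈ Ioo (0 : ℝ) 1) :
    funGeom f g l x ∈ Icc ((1 - l) * f x + l * g x
        - l * (1 - l) * ((g x + c₁ - xs x + (f x + c₂ - zs x)) / 2)) ((1 - l) * f x + l * g x) := by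
  have hJ := intervalIntegral_mem_Icc_of_mem_Icc (f := fun t => geomWeight l t * funHarm f g t x)
    zero_le_one ((measurable_geomWeight.of_uncurry_left (x := l)).aestronglyMeasurable.mul
      (aestronglyMeasurable_funHarm x (sub_le_sub_of_subgradient hxs) hc₁))
    (intervalIntegrable_geomWeight_mul hl (f x) (g x) (g x + c₁ - xs x + (f x + c₂ - zs x)))
    (intervalIntegrable_geomWeight_mul hl (f x) (g x) 0) fun t ht => by
      have hH := funHarm_mem_Icc hxs hzs hc₁ hc₂ (Ioo_subset_Icc_self ht)
      have hw := geomWeight_nonneg l (Ioo_subset_Icc_self ht)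
      exact ⟨mul_le_mul_of_nonneg_left hH.1 hw, by simpa using mul_le_mul_of_nonneg_left hH.2 hw⟩
  rw [integral_geomWeight_mul hl, integral_geomWeight_mul hl] at hJ
  have hsin : 0 < sin (π * l) :=
    sin_pos_of_pos_of_lt_pi (by nlinarith [pi_pos, hl.1]) (by nlinarith [pi_pos, hl.2])
  have hcancel : ∀ P, sin (π * l) / π * (π / sin (π * l) * P) = P := fun P => by field_simp
  have hscale : 0 ≤ sin (π * l) / π := (div_pos hsin pi_pos).le
  have h₁ := mul_le_mul_of_nonneg_left hJ.1 hscale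
  have h₂ := mul_le_mul_of_nonneg_left hJ.2 hscale
  rw [hcancel, ← funGeom_eq] at h₁ h₂
  exact ⟨h₁, by linarith⟩

end Subgradient

theorem funLog_reverse_subgradient_general
    {E : Type*} [NormedAddCommGroup E] [NormedSpace ℝ E]
    (f g : E → ℝ)
    (x : E) (xs zs : E →L[ℝ] ℝ)
    (hxs : ∀ u : E, f x + xs (u - x) ≤ f u)
    (hzs : ∀ u : E, g x + zs (u - x) ≤ g u) :
    ∀ c₁ c₂ : ℝ, (∀ u : E, xs u - g u ≤ c₁) → (∀ u : E, zs u - f u ≤ c₂) →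
      0 ≤ (f x + g x) / 2 - funLog f g x ∧
      (f x + g x) / 2 - funLog f g x ≤
        (1 / 12) * ((g x + c₁ - xs x) + (f x + c₂ - zs x)) := by
  intro c₁ c₂ hc₁ hc₂
  have hL := intervalIntegral_mem_Icc_of_mem_Icc zero_le_one
    (aestronglyMeasurable_funGeom
      (aestronglyMeasurable_funHarm x (sub_le_sub_of_subgradient hxs) hc₁))
    (Continuous.intervalIntegrable (by fun_prop) _ _)
    (Continuous.intervalIntegrable (by fun_prop) _ _)
    fun l hl => funGeom_mem_Icc hxs hzs hc₁ hc₂ hl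
  have hmean : ∫ l in (0 : ℝ)..1, ((1 - l) * f x + l * g x) = (f x + g x) / 2 := by
    simpa using integral_one_sub_mul_add_mul_sub (f x) (g x) 0
  rw [integral_one_sub_mul_add_mul_sub, hmean, ← funLog] at hL
  constructor <;> linarith [hL.1, hL.2]

/-- A reverse inequality for `L(f,g) ≤ f ∇ g` in terms of subgradients:
if `x* ∈ ∂f(x)`, `z* ∈ ∂g(x)`, and `c₁, c₂` bound `x* − g` and `z* − f` respectively, then
`0 ≤ (f∇g)(x) − L(f,g)(x) ≤ (1/12)((g(x) + c₁ − x*(x)) + (f(x) + c₂ − z*(x)))`. -/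
theorem funLog_reverse_subgradient
    {E : Type*} [NormedAddCommGroup E] [NormedSpace ℝ E]
    (f g : E → ℝ)
    (hf : ConvexOn ℝ Set.univ f) (hfc : Continuous f)
    (hg : ConvexOn ℝ Set.univ g) (hgc : Continuous g)
    (hmin : ∃ φ₀ : E →L[ℝ] ℝ, ∃ c : ℝ, ∀ u : E, φ₀ u - c ≤ f u ∧ φ₀ u - c ≤ g u)
    (x : E) (xs zs : E →L[ℝ] ℝ)
    (hxs : ∀ u : E, f x + xs (u - x) ≤ f u)
    (hzs : ∀ u : E, g x + zs (u - x) ≤ g u) :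
    ∀ c₁ c₂ : ℝ, (∀ u : E, xs u - g u ≤ c₁) → (∀ u : E, zs u - f u ≤ c₂) →
      0 ≤ (f x + g x) / 2 - funLog f g x ∧
      (f x + g x) / 2 - funLog f g x ≤
        (1 / 12) * ((g x + c₁ - xs x) + (f x + c₂ - zs x)) :=
  funLog_reverse_subgradient_general f g x xs zs hxs hzs
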